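/- arXiv:1802.04615 — 5 statements merged into one kernel-verified Lean document; each statement's English description precedes it below -/
import Mathlib

section
/- Let p = q = 1/2 (symmetric simple random walk). For every n ≥ 1 and every integer k with 0 ≤ k ≤ n, the maximum satisfies P{M_n^+ = k} = 2^{-n} · C(n, ⌊(n-k)/2⌋), where C denotes the binomial coefficient. -/
open Finset Filter

/-- The value `±1` of a single step of the walk, driven by a Boolean. -/
def step (b : Bool) : ℤ := if b then 1 else -1

/-- The partial sum `S_j = X_1 + ⋯ + X_j` of the simple random walk driven by `ω`. -/
def walk {n : ℕ} (ω : Fin n → Bool) (j : ℕ) : ℤ :=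
  ∑ i ∈ Finset.univ.filter fun i : Fin n => (i : ℕ) < j, step (ω i)

/-- `M_n^+ = max_{0 ≤ j ≤ n} S_j`. -/
def mplus {n : ℕ} (ω : Fin n → Bool) : ℤ :=
  (Finset.range (n + 1)).sup' (by simp) (walk ω)

/-- `M_n^- = -min_{0 ≤ j ≤ n} S_j`. -/
def mminus {n : ℕ} (ω : Fin n → Bool) : ℤ :=
  -((Finset.range (n + 1)).inf' (by simp) (walk ω))

/-- The probability weight of the path `ω` when `P{Xᵢ = 1} = p`, `P{Xᵢ = -1} = 1 - p`,
independently over `i`. -/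
def wt (p : ℝ) {n : ℕ} (ω : Fin n → Bool) : ℝ :=
  ∏ i, if ω i then p else 1 - p

/-- The probability of an event `A` for a walk of length `n`. -/
noncomputable def prob (p : ℝ) {n : ℕ} (A : Set (Fin n → Bool)) : ℝ :=
  ∑ ω : Fin n → Bool, A.indicator (wt p) ω

/-- The expectation of a functional `f` of a walk of length `n`. -/
noncomputable def expectation (p : ℝ) {n : ℕ} (f : (Fin n → Bool) → ℝ) : ℝ :=
  ∑ ω : Fin n → Bool, wt p ω * f ω

lemma walk_zero {n : ℕ} (ω : Fin n → Bool) : walk ω 0 = 0 := by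
  simp [walk]

lemma walk_eq {n : ℕ} (ω : Fin n → Bool) (j : ℕ) :
    walk ω j = ∑ i : Fin n, if (i : ℕ) < j then step (ω i) else 0 := by
  rw [walk, Finset.sum_filter]

lemma walk_cons_succ {n : ℕ} (b : Bool) (ω : Fin n → Bool) (j : ℕ) :
    walk (Fin.cons b ω) (j + 1) = step b + walk ω j := by
  rw [walk_eq, walk_eq, Fin.sum_univ_succ]
  simp [Fin.cons_succ, Nat.succ_lt_succ_iff]

lemma mplus_nonneg {n : ℕ} (ω : Fin n → Bool) : 0 ≤ mplus ω := by
  have h0 : (0 : ℕ) ∈ Finset.range (n + 1) := by simp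
  have := Finset.le_sup' (walk ω) h0
  rwa [walk_zero] at this

lemma walk_le {n : ℕ} (ω : Fin n → Bool) (j : ℕ) : walk ω j ≤ (n : ℤ) := by
  calc walk ω j ≤ ∑ _i ∈ Finset.univ.filter fun i : Fin n => (i : ℕ) < j, (1 : ℤ) := by
        apply Finset.sum_le_sum
        intro i _
        unfold step; split <;> omega
    _ = ((Finset.univ.filter fun i : Fin n => (i : ℕ) < j).card : ℤ) := by simp
    _ ≤ (n : ℤ) := by
        have := Finset.card_filter_le (Finset.univ : Finset (Fin n)) (fun i : Fin n => (i : ℕ) < j)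
        simp at this
        exact_mod_cast this

lemma mplus_le {n : ℕ} (ω : Fin n → Bool) : mplus ω ≤ (n : ℤ) := by
  apply Finset.sup'_le
  intro j _
  exact walk_le ω j

lemma mplus_cons {n : ℕ} (b : Bool) (ω : Fin n → Bool) :
    mplus (Fin.cons b ω) = max 0 (step b + mplus ω) := by
  apply le_antisymm
  · apply Finset.sup'_le
    intro j hj
    rcases j with _ | j'
    · rw [walk_zero]; exact le_max_left _ _
    · rw [walk_cons_succ]
      refine le_trans ?_ (le_max_right _ _)
      have hj' : j' ∈ Finset.range (n + 1) := by
        simp at hj ⊢; omega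
      have := Finset.le_sup' (walk ω) hj'
      rw [mplus]
      omega
  · rw [max_le_iff]
    constructor
    · exact mplus_nonneg _
    · obtain ⟨j, hj, hje⟩ := Finset.exists_mem_eq_sup' (by simp : (Finset.range (n+1)).Nonempty) (walk ω)
      have hj1 : j + 1 ∈ Finset.range (n + 1 + 1) := by simp at hj ⊢; omega
      have := Finset.le_sup' (walk (Fin.cons b ω)) hj1
      rw [walk_cons_succ] at this
      rw [show mplus ω = walk ω j from hje]
      have h2 : mplus (Fin.cons b ω) = (Finset.range (n + 1 + 1)).sup' (by simp) (walk (Fin.cons b ω)) := rfl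
      rw [h2]
      omega

/-- real-valued count of paths with maximum `k` -/
noncomputable def cnt (n k : ℕ) : ℝ :=
  ∑ ω : Fin n → Bool, if mplus ω = (k : ℤ) then 1 else 0

lemma cnt_zero (k : ℕ) : cnt 0 k = if k = 0 then 1 else 0 := by
  rw [cnt]
  rw [Fintype.sum_eq_single (fun i : Fin 0 => true) (by intro x hx; exact absurd (funext (fun i => i.elim0)) hx)]
  have : mplus (fun _ : Fin 0 => true) = 0 := by
    simp [mplus, Finset.range_one, walk_zero]
  rw [this]
  by_cases h : k = 0 <;> simp [h]
  omega

lemma cnt_succ (n k : ℕ) :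
    cnt (n + 1) k =
      (∑ ω : Fin n → Bool, if max 0 (1 + mplus ω) = (k : ℤ) then (1:ℝ) else 0) +
      (∑ ω : Fin n → Bool, if max 0 (-1 + mplus ω) = (k : ℤ) then (1:ℝ) else 0) := by
  rw [cnt, ← Equiv.sum_comp (Fin.consEquiv (fun _ : Fin (n+1) => Bool))]
  rw [Fintype.sum_prod_type, Fintype.sum_bool]
  congr 1
  · apply Finset.sum_congr rfl; intro ω _
    have h : mplus ((Fin.consEquiv fun _ : Fin (n+1) => Bool) (true, ω)) = max 0 (1 + mplus ω) := mplus_cons true ω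
    rw [h]
  · apply Finset.sum_congr rfl; intro ω _
    have h : mplus ((Fin.consEquiv fun _ : Fin (n+1) => Bool) (false, ω)) = max 0 (-1 + mplus ω) := mplus_cons false ω
    rw [h]

theorem test : True := trivial

lemma cnt_gt {n k : ℕ} (h : n < k) : cnt n k = 0 := by
  rw [cnt]
  apply Finset.sum_eq_zero
  intro ω _
  have := mplus_le ω
  have hne : ¬ (mplus ω = (k : ℤ)) := by
    intro he; rw [he] at this; omega
  simp [hne]

lemma cnt_succ_pos (n k : ℕ) : cnt (n + 1) (k + 1) = cnt n k + cnt n (k + 2) := by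
  rw [cnt_succ, cnt, cnt]
  congr 1
  · apply Finset.sum_congr rfl; intro ω _
    have h := mplus_nonneg ω
    have : (max 0 (1 + mplus ω) = ((k:ℕ)+1 : ℤ)) ↔ mplus ω = (k : ℤ) := by
      constructor <;> intro he <;> omega
    simp only [Nat.cast_add, Nat.cast_one] at *
    rw [if_congr this rfl rfl]
  · apply Finset.sum_congr rfl; intro ω _
    have h := mplus_nonneg ω
    have : (max 0 (-1 + mplus ω) = ((k:ℕ)+1 : ℤ)) ↔ mplus ω = ((k : ℕ) + 2 : ℤ) := by
      constructor <;> intro he <;> omega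
    simp only [Nat.cast_add, Nat.cast_one, Nat.cast_ofNat] at *
    rw [if_congr this rfl rfl]

lemma cnt_succ_zero (n : ℕ) : cnt (n + 1) 0 = cnt n 0 + cnt n 1 := by
  rw [cnt_succ, cnt, cnt]
  have h1 : (∑ ω : Fin n → Bool, if max 0 (1 + mplus ω) = ((0:ℕ) : ℤ) then (1:ℝ) else 0) = 0 := by
    apply Finset.sum_eq_zero; intro ω _
    have h := mplus_nonneg ω
    have : ¬ (max 0 (1 + mplus ω) = ((0:ℕ) : ℤ)) := by simp only [Nat.cast_zero]; omega
    rw [if_neg this]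
  rw [h1, zero_add, ← Finset.sum_add_distrib]
  apply Finset.sum_congr rfl; intro ω _
  have h := mplus_nonneg ω
  have hC1 : (max 0 (-1 + mplus ω) = ((0:ℕ):ℤ)) ↔ (mplus ω = ((0:ℕ):ℤ) ∨ mplus ω = ((1:ℕ):ℤ)) := by
    simp only [Nat.cast_zero, Nat.cast_one]
    omega
  rw [if_congr hC1 rfl rfl]
  by_cases h0 : mplus ω = ((0:ℕ):ℤ)
  · have h1' : ¬ mplus ω = ((1:ℕ):ℤ) := by
      simp only [Nat.cast_zero, Nat.cast_one] at h0 ⊢; omega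
    rw [if_pos (Or.inl h0), if_pos h0, if_neg h1']
    norm_num
  · by_cases h1' : mplus ω = ((1:ℕ):ℤ)
    · rw [if_pos (Or.inr h1'), if_neg h0, if_pos h1']
      norm_num
    · rw [if_neg (by tauto), if_neg h0, if_neg h1']
      norm_num

lemma cnt_eq : ∀ n k : ℕ, cnt n k = if k ≤ n then (n.choose ((n - k) / 2) : ℝ) else 0 := by
  intro n
  induction n with
  | zero =>
    intro k
    rw [cnt_zero]
    rcases Nat.eq_zero_or_pos k with h | h
    · simp [h]
    · have : ¬ k ≤ 0 := by omega
      simp [this, Nat.pos_iff_ne_zero.mp h]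
  | succ n ih =>
    intro k
    rcases k with _ | k'
    · -- k = 0
      rw [cnt_succ_zero, ih 0, ih 1]
      rcases Nat.eq_zero_or_pos n with h | h
      · subst h; norm_num
      · have h1 : (1:ℕ) ≤ n := h
        simp only [Nat.zero_le, if_pos, if_pos h1, Nat.sub_zero]
        have key : n.choose (n / 2) + n.choose ((n - 1) / 2) = (n + 1).choose ((n + 1) / 2) := by
          rcases Nat.even_or_odd n with ⟨m, hm⟩ | ⟨m, hm⟩
          · subst hm
            have hm1 : 1 ≤ m := by omega
            obtain ⟨m', rfl⟩ : ∃ m', m = m' + 1 := ⟨m - 1, by omega⟩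
            have e1 : (m' + 1 + (m' + 1)) / 2 = m' + 1 := by omega
            have e2 : (m' + 1 + (m' + 1) - 1) / 2 = m' := by omega
            have e3 : (m' + 1 + (m' + 1) + 1) / 2 = m' + 1 := by omega
            rw [e1, e2, e3]
            have e4 : m' + 1 + (m' + 1) + 1 = (m' + 1 + (m' + 1)) + 1 := by ring
            rw [e4, Nat.choose_succ_succ]
            simp only [Nat.succ_eq_add_one]
            omega
          · subst hm
            have e1 : (2 * m + 1) / 2 = m := by omega
            have e2 : (2 * m + 1 - 1) / 2 = m := by omega
            have e3 : (2 * m + 1 + 1) / 2 = m + 1 := by omega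
            rw [e1, e2, e3, Nat.choose_succ_succ]
            simp only [Nat.succ_eq_add_one]
            have e4 : (2 * m + 1).choose (m + 1) = (2 * m + 1).choose m := by
              rw [← Nat.choose_symm (by omega : m ≤ 2 * m + 1)]
              congr 1
              omega
            omega
        rw [← key]
        push_cast
        ring
    · -- k = k' + 1
      rw [cnt_succ_pos, ih k', ih (k'+2)]
      by_cases hk : k' + 1 ≤ n + 1
      · rw [if_pos hk, if_pos (by omega : k' ≤ n)]
        by_cases hk2 : k' + 2 ≤ n
        · rw [if_pos hk2, ← Nat.cast_add]
          congr 1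
          obtain ⟨j', hj'⟩ : ∃ j', (n - k') / 2 = j' + 1 := ⟨(n - k') / 2 - 1, by omega⟩
          have e1 : (n - (k' + 2)) / 2 = j' := by omega
          have e2 : (n + 1 - (k' + 1)) / 2 = j' + 1 := by omega
          rw [hj', e1, e2, Nat.choose_succ_succ]
          simp only [Nat.succ_eq_add_one]
          omega
        · rw [if_neg hk2, add_zero]
          have e0 : (n - k') / 2 = 0 := by omega
          have e0' : (n + 1 - (k' + 1)) / 2 = 0 := by omega
          rw [e0, e0', Nat.choose_zero_right, Nat.choose_zero_right]
      · rw [if_neg hk, if_neg (by omega), if_neg (by omega), add_zero]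


theorem statement0 (n k : ℕ) (hn : 1 ≤ n) (hk : k ≤ n) :
    prob (1/2) {ω : Fin n → Bool | mplus ω = (k : ℤ)} =
      (1/2 : ℝ) ^ n * (n.choose ((n - k) / 2)) := by
  have hwt : ∀ ω : Fin n → Bool, wt (1/2) ω = (1/2:ℝ)^n := by
    intro ω
    rw [wt]
    rw [Finset.prod_congr rfl (fun i _ => by split <;> norm_num : ∀ i ∈ Finset.univ, (if ω i then (1/2:ℝ) else 1 - 1/2) = 1/2)]
    simp
  rw [prob]
  calc (∑ ω : Fin n → Bool, Set.indicator {ω : Fin n → Bool | mplus ω = (k : ℤ)} (wt (1/2)) ω)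
      = ∑ ω : Fin n → Bool, if mplus ω = (k:ℤ) then (1/2:ℝ)^n else 0 := by
        apply Finset.sum_congr rfl; intro ω _
        rw [Set.indicator_apply]
        simp only [Set.mem_setOf_eq]
        split
        · exact hwt ω
        · rfl
    _ = (1/2:ℝ)^n * cnt n k := by
        rw [cnt, Finset.mul_sum]
        apply Finset.sum_congr rfl; intro ω _
        split <;> simp
    _ = _ := by rw [cnt_eq, if_pos hk]
end

section
/- Let p = q = 1/2 (symmetric simple random walk). Then the variance satisfies Var(M_n^+)/n → 1 - 2/π as n → ∞. -/
open Finset Filter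

/-!
Reflecting a path after its first visit to `k ≥ 0` gives the reflection principle
`#{M_n ≥ k} = #{S_n ≥ k} + #{S_n > k}`, and summing over the levels `k` turns it into
`E f(M_n) = E f(S_n⁺) + E f((S_n - 1)⁺) - f 0` for every `f`. Together with the symmetry
of `S_n`, `f x = x² + x` gives `E[M_n²] + E[M_n] = E[S_n²] = n`, and `f x = x` gives
`E[M_n] = E|S_n| - P(S_n > 0)`, so that `Var(M_n) / n = 1 - E[M_n] / n - E[M_n]² / n`.
Finally `E|S_{n+1}| = E|S_n| + P(S_n = 0)` yields `E|S_n| = n C(2m, m) / 4^m` with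
`m = ⌊n/2⌋`, and Wallis' product gives `E|S_n| ~ √(2n/π)`.
-/

open scoped Nat Topology

lemma sub_eq_sum_range_ite {M : Type*} [AddCommGroup M] (f : ℤ → M) {m : ℤ} {n : ℕ}
    (h0 : 0 ≤ m) (hm : m ≤ n) :
    f m - f 0 = ∑ k ∈ range n, if (k : ℤ) + 1 ≤ m then f (k + 1) - f k else 0 := by
  lift m to ℕ using h0
  have hrange : (range n).filter (fun k : ℕ => (k : ℤ) + 1 ≤ m) = range m := by
    ext k; simp; omega
  rw [← Finset.sum_filter, hrange]
  exact_mod_cast (Finset.sum_range_sub (fun i : ℕ => f i) m).symm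

lemma sum_comp_eq_sum_card_le {ι M : Type*} [Fintype ι] [AddCommGroup M] (f : ℤ → M)
    (g : ι → ℤ) {n : ℕ} (hg : ∀ i, 0 ≤ g i ∧ g i ≤ n) :
    ∑ i, f (g i) = Fintype.card ι • f 0 +
      ∑ k ∈ range n, #{i | (k : ℤ) + 1 ≤ g i} • (f (k + 1) - f k) := by
  have hpoint (i : ι) : f (g i) = f 0 + ∑ k ∈ range n,
      if (k : ℤ) + 1 ≤ g i then f (k + 1) - f k else 0 := by
    rw [← sub_eq_sum_range_ite f (hg i).1 (hg i).2, add_sub_cancel]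
  simp only [hpoint, Finset.sum_add_distrib, Finset.sum_const, Finset.card_univ]
  rw [Finset.sum_comm]
  congr 1
  refine Finset.sum_congr rfl fun k _ => ?_
  rw [← Finset.sum_filter, Finset.sum_const]

lemma abs_add_one_add_abs_sub_one (s : ℤ) :
    |s + 1| + |s - 1| = 2 * |s| + 2 * if s = 0 then 1 else 0 := by
  split_ifs <;> cases abs_cases s <;> cases abs_cases (s + 1) <;> cases abs_cases (s - 1) <;> omega

lemma tendsto_inv_sqrt_natCast : Tendsto (fun n : ℕ => (√n)⁻¹) atTop (𝓝 0) :=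
  tendsto_inv_atTop_zero.comp (Real.tendsto_sqrt_atTop.comp tendsto_natCast_atTop_atTop)

open Real in
theorem tendsto_two_mul_add_one_mul_centralBinom_div_sq :
    Tendsto (fun k : ℕ => (2 * k + 1) * ((k.centralBinom : ℝ) / 4 ^ k) ^ 2) atTop
      (𝓝 (2 / π)) := by
  have hW (k : ℕ) : (2 * k + 1) * ((k.centralBinom : ℝ) / 4 ^ k) ^ 2 = (Wallis.W k)⁻¹ := by
    have hfac : (k.centralBinom : ℝ) * k ! * k ! = (2 * k)! := by
      have := Nat.choose_mul_factorial_mul_factorial (show k ≤ 2 * k by omega)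
      rw [show 2 * k - k = k by omega, ← Nat.centralBinom_eq_two_mul_choose] at this
      exact_mod_cast this
    rw [Wallis.W_eq_factorial_ratio, ← hfac, show (4 : ℝ) ^ k = 2 ^ (2 * k) by
      rw [pow_mul]; norm_num]
    have : (k ! : ℝ) ≠ 0 := by positivity
    field_simp
    ring
  simp only [hW]
  simpa [inv_div] using Wallis.tendsto_W_nhds_pi_div_two.inv₀ (by positivity)

open Real in
theorem tendsto_mul_centralBinom_half_div_sqrt :
    Tendsto (fun n : ℕ => n * ((n / 2).centralBinom : ℝ) / 4 ^ (n / 2) / √n) atTop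
      (𝓝 √(2 / π)) := by
  have hhalf : Tendsto (fun n : ℕ => n / 2) atTop atTop :=
    tendsto_atTop_atTop.2 fun b => ⟨2 * b, fun n hn => by omega⟩
  have hratio : Tendsto (fun n : ℕ => (n : ℝ) / (2 * (n / 2 : ℕ) + 1)) atTop (𝓝 1) := by
    refine tendsto_of_tendsto_of_tendsto_of_le_of_le (tendsto_natCast_div_add_atTop (1 : ℝ))
      tendsto_const_nhds (fun n => ?_) (fun n => ?_)
    · refine div_le_div_of_nonneg_left n.cast_nonneg (by positivity) ?_
      exact_mod_cast (show 2 * (n / 2) + 1 ≤ n + 1 by omega)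
    · rw [div_le_one (by positivity)]
      have := Nat.cast_le (α := ℝ) |>.2 (show n ≤ 2 * (n / 2) + 1 by omega)
      push_cast at this
      exact this
  have hsq := ((tendsto_two_mul_add_one_mul_centralBinom_div_sq.comp hhalf).mul hratio).sqrt
  rw [mul_one] at hsq
  refine hsq.congr fun n => ?_
  have hodd : (2 * (n / 2 : ℕ) + 1 : ℝ) ≠ 0 := by positivity
  rcases n.eq_zero_or_pos with rfl | hn
  · simp
  rw [Function.comp_apply, mul_comm, ← mul_assoc, div_mul_cancel₀ _ hodd,
    Real.sqrt_mul n.cast_nonneg, Real.sqrt_sq (by positivity)]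
  have : √(n : ℝ) ≠ 0 := by positivity
  field_simp
  rw [Real.sq_sqrt n.cast_nonneg]
  ring

namespace SimpleWalk

variable {n : ℕ}

def stepAt (ω : Fin n → Bool) (i : ℕ) : ℤ :=
  if h : i < n then step (ω ⟨i, h⟩) else 0

lemma abs_stepAt_le (ω : Fin n → Bool) (i : ℕ) : |stepAt ω i| ≤ 1 := by
  unfold stepAt step; split_ifs <;> simp

lemma walk_eq_sum_range (ω : Fin n → Bool) (j : ℕ) :
    walk ω j = ∑ i ∈ range j, stepAt ω i := by
  have hstep (i : Fin n) : step (ω i) = stepAt ω i := by simp [stepAt]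
  simp only [walk, Finset.sum_filter, hstep]
  rw [Fin.sum_univ_eq_sum_range (fun i => if i < j then stepAt ω i else 0), ← Finset.sum_filter]
  refine Finset.sum_subset (fun i => by simp) fun i hi hi' => ?_
  simp only [Finset.mem_filter, Finset.mem_range] at hi hi'
  simp [stepAt, show ¬ i < n by omega]

lemma walk_zero (ω : Fin n → Bool) : walk ω 0 = 0 := by
  simp [walk_eq_sum_range]

lemma walk_succ (ω : Fin n → Bool) (j : ℕ) : walk ω (j + 1) = walk ω j + stepAt ω j := by
  simp only [walk_eq_sum_range, Finset.sum_range_succ]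

lemma walk_le (ω : Fin n → Bool) (j : ℕ) : walk ω j ≤ j := by
  rw [walk_eq_sum_range]
  calc ∑ i ∈ range j, stepAt ω i ≤ ∑ _i ∈ range j, 1 :=
        Finset.sum_le_sum fun i _ => (abs_le.1 (abs_stepAt_le ω i)).2
    _ = j := by simp

lemma exists_walk_eq_of_le {ω : Fin n → Bool} {k : ℤ} (hk : 0 ≤ k) {j : ℕ}
    (h : k ≤ walk ω j) : ∃ i ≤ j, walk ω i = k := by
  induction j with
  | zero => exact ⟨0, le_rfl, by rw [walk_zero] at h ⊢; omega⟩
  | succ j ih =>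
    by_cases hj : k ≤ walk ω j
    · obtain ⟨i, hi, hwi⟩ := ih hj
      exact ⟨i, by omega, hwi⟩
    · have := (abs_le.1 (abs_stepAt_le ω j)).2
      exact ⟨j + 1, le_rfl, by rw [walk_succ] at h ⊢; omega⟩

lemma walk_le_mplus (ω : Fin n → Bool) {j : ℕ} (hj : j ≤ n) : walk ω j ≤ mplus ω :=
  Finset.le_sup' (walk ω) (Finset.mem_range.2 (Nat.lt_succ_of_le hj))

lemma le_mplus_iff {ω : Fin n → Bool} {k : ℤ} (hk : 0 ≤ k) :
    k ≤ mplus ω ↔ ∃ j ≤ n, walk ω j = k := by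
  constructor
  · intro h
    obtain ⟨j, hj, hkj⟩ := (Finset.le_sup'_iff _).1 h
    obtain ⟨i, hi, hwi⟩ := exists_walk_eq_of_le hk hkj
    exact ⟨i, hi.trans (Nat.lt_succ_iff.1 (Finset.mem_range.1 hj)), hwi⟩
  · rintro ⟨j, hj, rfl⟩
    exact walk_le_mplus ω hj

lemma mplus_nonneg (ω : Fin n → Bool) : 0 ≤ mplus ω :=
  walk_zero ω ▸ walk_le_mplus ω (Nat.zero_le n)

lemma mplus_le (ω : Fin n → Bool) : mplus ω ≤ n :=
  Finset.sup'_le _ _ fun j hj =>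
    (walk_le ω j).trans (by exact_mod_cast Nat.lt_succ_iff.1 (Finset.mem_range.1 hj))

def reflectFrom (t : ℕ) (ω : Fin n → Bool) : Fin n → Bool :=
  fun i => if (i : ℕ) < t then ω i else !ω i

lemma reflectFrom_reflectFrom (t : ℕ) (ω : Fin n → Bool) :
    reflectFrom t (reflectFrom t ω) = ω := by
  funext i
  unfold reflectFrom
  split_ifs <;> simp

lemma stepAt_reflectFrom (t : ℕ) (ω : Fin n → Bool) (i : ℕ) :
    stepAt (reflectFrom t ω) i = if i < t then stepAt ω i else -stepAt ω i := by
  unfold stepAt reflectFrom step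
  split_ifs <;> simp_all

lemma walk_reflectFrom_of_le {t j : ℕ} (ω : Fin n → Bool) (hj : j ≤ t) :
    walk (reflectFrom t ω) j = walk ω j := by
  simp only [walk_eq_sum_range, stepAt_reflectFrom]
  exact Finset.sum_congr rfl fun i hi => if_pos ((Finset.mem_range.1 hi).trans_le hj)

lemma walk_reflectFrom_of_ge {t j : ℕ} (ω : Fin n → Bool) (hj : t ≤ j) :
    walk (reflectFrom t ω) j = 2 * walk ω t - walk ω j := by
  have split (g : ℕ → ℤ) :
      ∑ i ∈ range j, g i = ∑ i ∈ range t, g i + ∑ i ∈ Ico t j, g i :=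
    (Finset.sum_range_add_sum_Ico g hj).symm
  simp only [walk_eq_sum_range, split, stepAt_reflectFrom]
  rw [Finset.sum_congr rfl fun i hi => if_pos (Finset.mem_range.1 hi),
    Finset.sum_congr rfl fun i hi => if_neg (not_lt.2 (Finset.mem_Ico.1 hi).1),
    Finset.sum_neg_distrib]
  ring

-- `sInf ∅ = 0`: this is the first visit to `k` only when `k` is visited at all.
noncomputable def hitTime (ω : Fin n → Bool) (k : ℤ) : ℕ := sInf {j | walk ω j = k}

lemma walk_hitTime {ω : Fin n → Bool} {k : ℤ} (h : ∃ j, walk ω j = k) :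
    walk ω (hitTime ω k) = k :=
  Nat.sInf_mem h

lemma hitTime_le {ω : Fin n → Bool} {k : ℤ} {j : ℕ} (h : walk ω j = k) :
    hitTime ω k ≤ j :=
  Nat.sInf_le h

lemma hitTime_eq_of_walk_eq {ω ω' : Fin n → Bool} {k : ℤ} (h : ∃ j, walk ω j = k)
    (heq : ∀ j ≤ hitTime ω k, walk ω' j = walk ω j) : hitTime ω' k = hitTime ω k := by
  refine le_antisymm (hitTime_le ((heq _ le_rfl).trans (walk_hitTime h))) (not_lt.1 fun hlt => ?_)
  have h' : walk ω' (hitTime ω' k) = k :=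
    walk_hitTime ⟨_, (heq _ le_rfl).trans (walk_hitTime h)⟩
  exact Nat.notMem_of_lt_sInf hlt (show walk ω _ = k from (heq _ hlt.le) ▸ h')

noncomputable def reflectAtHit (k : ℤ) (ω : Fin n → Bool) : Fin n → Bool :=
  reflectFrom (hitTime ω k) ω

lemma hitTime_reflectAtHit {ω : Fin n → Bool} {k : ℤ} (h : ∃ j, walk ω j = k) :
    hitTime (reflectAtHit k ω) k = hitTime ω k :=
  hitTime_eq_of_walk_eq h fun _ hj => walk_reflectFrom_of_le ω hj

lemma reflectAtHit_reflectAtHit {ω : Fin n → Bool} {k : ℤ} (h : ∃ j, walk ω j = k) :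
    reflectAtHit k (reflectAtHit k ω) = ω := by
  rw [reflectAtHit, hitTime_reflectAtHit h]
  exact reflectFrom_reflectFrom _ ω

lemma walk_reflectAtHit {ω : Fin n → Bool} {k : ℤ} {j : ℕ} (hj : j ≤ n)
    (h : walk ω j = k) :
    walk (reflectAtHit k ω) n = 2 * k - walk ω n := by
  rw [reflectAtHit, walk_reflectFrom_of_ge ω ((hitTime_le h).trans hj), walk_hitTime ⟨j, h⟩]

lemma card_le_mplus_walk_lt (k : ℤ) (hk : 0 ≤ k) :
    #{ω : Fin n → Bool | k ≤ mplus ω ∧ walk ω n < k} =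
      #{ω : Fin n → Bool | k < walk ω n} := by
  refine Finset.card_nbij' (reflectAtHit k) (reflectAtHit k) ?_ ?_ ?_ ?_ <;>
    intro ω hω <;>
    simp only [Finset.coe_filter, Finset.mem_univ, true_and, Set.mem_ofPred_eq] at hω ⊢
  · obtain ⟨j, hj, hwj⟩ := (le_mplus_iff hk).1 hω.1
    rw [walk_reflectAtHit hj hwj]
    omega
  · obtain ⟨j, hj, hwj⟩ := exists_walk_eq_of_le hk hω.le
    refine ⟨(le_mplus_iff hk).2 ⟨hitTime ω k, (hitTime_le hwj).trans hj, ?_⟩, ?_⟩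
    · rw [reflectAtHit, walk_reflectFrom_of_le ω le_rfl, walk_hitTime ⟨j, hwj⟩]
    · rw [walk_reflectAtHit hj hwj]
      omega
  · obtain ⟨j, -, hwj⟩ := (le_mplus_iff hk).1 hω.1
    exact reflectAtHit_reflectAtHit ⟨j, hwj⟩
  · obtain ⟨j, -, hwj⟩ := exists_walk_eq_of_le hk hω.le
    exact reflectAtHit_reflectAtHit ⟨j, hwj⟩

theorem card_le_mplus (k : ℤ) (hk : 0 ≤ k) :
    #{ω : Fin n → Bool | k ≤ mplus ω} =
      #{ω : Fin n → Bool | k ≤ walk ω n} + #{ω : Fin n → Bool | k < walk ω n} := by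
  rw [← Finset.card_filter_add_card_filter_not (s := {ω | k ≤ mplus ω})
    (p := fun ω => k ≤ walk ω n), Finset.filter_filter, Finset.filter_filter,
    ← card_le_mplus_walk_lt k hk]
  congr 2
  · exact Finset.filter_congr fun ω _ =>
      and_iff_right_of_imp fun h => h.trans (walk_le_mplus ω le_rfl)
  · exact Finset.filter_congr fun ω _ => by rw [not_le]

theorem sum_comp_mplus {M : Type*} [AddCommGroup M] (f : ℤ → M) :
    ∑ ω : Fin n → Bool, f (mplus ω) =
      ∑ ω : Fin n → Bool, (f (max (walk ω n) 0) + f (max (walk ω n - 1) 0) - f 0) := by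
  have hS (ω : Fin n → Bool) : walk ω n ≤ n := walk_le ω n
  rw [Finset.sum_sub_distrib, Finset.sum_add_distrib,
    sum_comp_eq_sum_card_le f mplus fun ω => ⟨mplus_nonneg ω, mplus_le ω⟩,
    sum_comp_eq_sum_card_le f (fun ω => max (walk ω n) 0)
      fun ω => ⟨le_max_right _ _, max_le (hS ω) n.cast_nonneg⟩,
    sum_comp_eq_sum_card_le f (fun ω => max (walk ω n - 1) 0)
      fun ω => ⟨le_max_right _ _, max_le (by linarith [hS ω]) n.cast_nonneg⟩]
  have hcard (k : ℕ) : #{ω : Fin n → Bool | (k : ℤ) + 1 ≤ mplus ω} =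
      #{ω : Fin n → Bool | (k : ℤ) + 1 ≤ max (walk ω n) 0} +
        #{ω : Fin n → Bool | (k : ℤ) + 1 ≤ max (walk ω n - 1) 0} := by
    rw [card_le_mplus _ (by positivity)]
    congr 2 <;> exact Finset.filter_congr fun ω _ => by grind
  simp only [hcard, add_nsmul, Finset.sum_add_distrib, Finset.sum_const, Finset.card_univ]
  abel

lemma walk_last_eq_sum (ω : Fin n → Bool) : walk ω n = ∑ i, step (ω i) := by
  simp [walk]

theorem sum_comp_walk_succ {M : Type*} [AddCommMonoid M] (n : ℕ) (f : ℤ → M) :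
    ∑ ω : Fin (n + 1) → Bool, f (walk ω (n + 1)) =
      ∑ ω : Fin n → Bool, (f (walk ω n + 1) + f (walk ω n - 1)) := by
  rw [← (Fin.snocEquiv fun _ => Bool).sum_comp, Fintype.sum_prod_type, Fintype.sum_bool,
    ← Finset.sum_add_distrib]
  simp [Fin.snocEquiv, walk_last_eq_sum, Fin.sum_univ_castSucc, step, sub_eq_add_neg]

theorem sum_comp_neg_walk {M : Type*} [AddCommMonoid M] (n : ℕ) (f : ℤ → M) :
    ∑ ω : Fin n → Bool, f (-walk ω n) = ∑ ω : Fin n → Bool, f (walk ω n) := by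
  induction n generalizing f with
  | zero => simp [walk_zero]
  | succ n ih =>
    rw [sum_comp_walk_succ n (fun s => f (-s)), sum_comp_walk_succ]
    simpa [neg_add, neg_sub', add_comm, sub_eq_add_neg] using ih fun s => f (s - 1) + f (s + 1)

theorem sum_comp_walk_eq_sum_choose {M : Type*} [AddCommMonoid M] (n : ℕ) (f : ℤ → M) :
    ∑ ω : Fin n → Bool, f (walk ω n) =
      ∑ j ∈ range (n + 1), n.choose j • f (2 * j - n) := by
  induction n generalizing f with
  | zero => simp [walk_zero]
  | succ n ih =>
    rw [sum_comp_walk_succ, Finset.sum_add_distrib, ih (fun s => f (s + 1)),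
      ih (fun s => f (s - 1)), Finset.sum_range_succ' _ (n + 1)]
    simp only [Nat.choose_succ_succ', add_nsmul, Finset.sum_add_distrib]
    rw [Finset.sum_range_succ (fun j => n.choose (j + 1) • _), Nat.choose_succ_self, zero_nsmul,
      add_zero]
    rw [Finset.sum_range_succ' (fun j => n.choose j • f (2 * j - n - 1)), add_assoc]
    congr 1
    · exact Finset.sum_congr rfl fun j _ => by push_cast; ring_nf
    · congr 1
      · exact Finset.sum_congr rfl fun j _ => by push_cast; ring_nf
      · rw [Nat.choose_zero_right, Nat.choose_zero_right, one_smul, one_smul]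
        push_cast
        ring_nf

theorem sum_walk_sq (n : ℕ) : ∑ ω : Fin n → Bool, walk ω n ^ 2 = n * 2 ^ n := by
  induction n with
  | zero => simp [walk_zero]
  | succ n ih =>
    have hpoint (s : ℤ) : (s + 1) ^ 2 + (s - 1) ^ 2 = 2 * s ^ 2 + 2 := by ring
    rw [sum_comp_walk_succ n (fun s => s ^ 2)]
    simp only [hpoint, Finset.sum_add_distrib, ← Finset.mul_sum, ih, Finset.sum_const,
      Finset.card_univ, Fintype.card_pi, Fintype.card_bool, Finset.prod_const, Fintype.card_fin,
      nsmul_eq_mul]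
    push_cast
    ring

lemma card_walk_eq_zero_two_mul (m : ℕ) :
    #{ω : Fin (2 * m) → Bool | walk ω (2 * m) = 0} = m.centralBinom := by
  rw [Finset.card_filter, sum_comp_walk_eq_sum_choose (2 * m) fun s => if s = 0 then 1 else 0]
  have hiff (j : ℕ) : 2 * (j : ℤ) - (2 * m : ℕ) = 0 ↔ m = j := by push_cast; omega
  simp only [hiff, smul_eq_mul, mul_ite, mul_one, mul_zero, Finset.sum_ite_eq,
    Finset.mem_range, Nat.centralBinom]
  exact if_pos (by omega)

lemma card_walk_eq_zero_two_mul_add_one (m : ℕ) :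
    #{ω : Fin (2 * m + 1) → Bool | walk ω (2 * m + 1) = 0} = 0 := by
  rw [Finset.card_filter, sum_comp_walk_eq_sum_choose (2 * m + 1) fun s => if s = 0 then 1 else 0]
  refine Finset.sum_eq_zero fun j _ => ?_
  rw [if_neg (by push_cast; omega), smul_zero]

theorem sum_abs_walk_succ (n : ℕ) :
    ∑ ω : Fin (n + 1) → Bool, |(walk ω (n + 1) : ℝ)| =
      2 * (∑ ω : Fin n → Bool, |(walk ω n : ℝ)| +
        #{ω : Fin n → Bool | walk ω n = 0}) := by
  have hpoint (s : ℤ) : |((s + 1 : ℤ) : ℝ)| + |((s - 1 : ℤ) : ℝ)| =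
      2 * |(s : ℝ)| + 2 * if s = 0 then 1 else 0 := by
    simp only [← Int.cast_abs]
    exact_mod_cast abs_add_one_add_abs_sub_one s
  rw [sum_comp_walk_succ n (fun s => |(s : ℝ)|)]
  simp only [hpoint, Finset.sum_add_distrib, ← Finset.mul_sum, Finset.card_filter]
  push_cast
  ring

theorem sum_abs_walk (n : ℕ) :
    ∑ ω : Fin n → Bool, |(walk ω n : ℝ)| =
      2 ^ n * (n * (n / 2).centralBinom / 4 ^ (n / 2)) := by
  induction n with
  | zero => simp [walk_zero]
  | succ n ih =>
    have h4 (k : ℕ) : (4 : ℝ) ^ k = 2 ^ (2 * k) := by rw [pow_mul]; norm_num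
    rw [sum_abs_walk_succ, ih]
    obtain ⟨m, rfl | rfl⟩ := Nat.even_or_odd' n
    · rw [card_walk_eq_zero_two_mul, show (2 * m + 1) / 2 = m by omega,
        show 2 * m / 2 = m by omega, h4]
      field_simp
      push_cast
      ring
    · have hcb : ((m + 1 : ℕ) : ℝ) * (m + 1).centralBinom =
          2 * (2 * m + 1) * m.centralBinom := by
        exact_mod_cast Nat.succ_mul_centralBinom_succ m
      rw [card_walk_eq_zero_two_mul_add_one, show (2 * m + 1 + 1) / 2 = m + 1 by omega,
        show (2 * m + 1) / 2 = m by omega, h4, h4]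
      field_simp
      push_cast at hcb ⊢
      linear_combination (-2 * 2 ^ (2 * m) * 2 ^ (2 * m + 2) : ℝ) * hcb

lemma sum_two_nsmul_comp_max_walk {M : Type*} [AddCommMonoid M] (n : ℕ) (f : ℤ → M)
    (hf : f 0 = 0) :
    ∑ ω : Fin n → Bool, 2 • f (max (walk ω n) 0) =
      ∑ ω : Fin n → Bool, f |walk ω n| := by
  have hpoint (s : ℤ) : f (max s 0) + f (max (-s) 0) = f |s| := by
    rcases le_total 0 s with h | h
    · rw [max_eq_left h, max_eq_right (by omega), hf, add_zero, abs_of_nonneg h]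
    · rw [max_eq_right h, max_eq_left (by omega), hf, zero_add, abs_of_nonpos h]
  simp only [two_nsmul, Finset.sum_add_distrib]
  conv_lhs => arg 2; rw [← sum_comp_neg_walk n fun s => f (max s 0)]
  rw [← Finset.sum_add_distrib]
  simp only [hpoint]

theorem sum_mplus (n : ℕ) :
    ∑ ω : Fin n → Bool, mplus ω =
      ∑ ω : Fin n → Bool, |walk ω n| - #{ω : Fin n → Bool | 0 < walk ω n} := by
  have hpoint (s : ℤ) : max s 0 + max (s - 1) 0 - 0 = 2 • max s 0 - if 0 < s then 1 else 0 := by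
    rw [two_nsmul]; split_ifs <;> omega
  have habs := sum_two_nsmul_comp_max_walk n (fun s : ℤ => s) rfl
  rw [sum_comp_mplus (fun s => s), Finset.card_filter, ← habs]
  simp only [hpoint, Finset.sum_sub_distrib, Nat.cast_sum, Nat.cast_ite, Nat.cast_one,
    Nat.cast_zero]

theorem sum_mplus_sq_add_mplus (n : ℕ) :
    ∑ ω : Fin n → Bool, (mplus ω ^ 2 + mplus ω) = n * 2 ^ n := by
  have hpoint (s : ℤ) :
      (max s 0 ^ 2 + max s 0) + (max (s - 1) 0 ^ 2 + max (s - 1) 0) - (0 ^ 2 + 0) =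
        2 • max s 0 ^ 2 := by
    rcases le_or_gt s 0 with h | h
    · rw [max_eq_right h, max_eq_right (by omega)]; ring
    · rw [max_eq_left h.le, max_eq_left (by omega)]; ring
  rw [sum_comp_mplus (fun s => s ^ 2 + s)]
  simp only [hpoint]
  rw [sum_two_nsmul_comp_max_walk n (· ^ 2) (by simp)]
  simp only [sq_abs, sum_walk_sq]

lemma expectation_half {n : ℕ} (f : (Fin n → Bool) → ℝ) :
    expectation (1 / 2) f = (∑ ω, f ω) / 2 ^ n := by
  have hwt (ω : Fin n → Bool) : wt (1 / 2) ω = 1 / 2 ^ n := by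
    have hstep (b : Bool) : (if b then (1 / 2 : ℝ) else 1 - 1 / 2) = 1 / 2 := by
      cases b <;> norm_num
    simp only [wt, hstep, Finset.prod_const, Finset.card_univ, Fintype.card_fin, one_div_pow]
  simp only [expectation, hwt, one_div_mul_eq_div, Finset.sum_div]

theorem expectation_mplus (n : ℕ) :
    expectation (1 / 2) (fun ω : Fin n → Bool => (mplus ω : ℝ)) =
      n * ((n / 2).centralBinom : ℝ) / 4 ^ (n / 2) -
        #{ω : Fin n → Bool | 0 < walk ω n} / 2 ^ n := by
  have hsum := congrArg (Int.cast : ℤ → ℝ) (sum_mplus n)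
  push_cast at hsum
  rw [expectation_half, hsum, sum_abs_walk, sub_div]
  field_simp

theorem expectation_mplus_sq (n : ℕ) :
    expectation (1 / 2) (fun ω : Fin n → Bool => (mplus ω : ℝ) ^ 2) =
      n - expectation (1 / 2) (fun ω : Fin n → Bool => (mplus ω : ℝ)) := by
  have hsum := congrArg (Int.cast : ℤ → ℝ) (sum_mplus_sq_add_mplus n)
  push_cast at hsum
  rw [Finset.sum_add_distrib] at hsum
  rw [expectation_half, expectation_half, eq_sub_iff_add_eq, ← add_div, hsum]
  field_simp

open Real in
theorem tendsto_expectation_mplus_div_sqrt :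
    Tendsto
      (fun n : ℕ => expectation (1 / 2) (fun ω : Fin n → Bool => (mplus ω : ℝ)) / √n)
      atTop (𝓝 √(2 / π)) := by
  have hbound (n : ℕ) :
      (#{ω : Fin n → Bool | 0 < walk ω n} : ℝ) / 2 ^ n ∈ Set.Icc 0 1 := by
    refine ⟨by positivity, div_le_one_of_le₀ ?_ (by positivity)⟩
    exact_mod_cast (Finset.card_filter_le _ _).trans (by simp)
  have hsmall : Tendsto (fun n : ℕ =>
      (#{ω : Fin n → Bool | 0 < walk ω n} : ℝ) / 2 ^ n / √n) atTop (𝓝 0) := by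
    refine squeeze_zero (fun n => div_nonneg (hbound n).1 (Real.sqrt_nonneg n)) (fun n => ?_)
      tendsto_inv_sqrt_natCast
    rw [div_eq_mul_inv]
    exact mul_le_of_le_one_left (by positivity) (hbound n).2
  have hlim := tendsto_mul_centralBinom_half_div_sqrt.sub hsmall
  rw [sub_zero] at hlim
  refine hlim.congr fun n => ?_
  rw [expectation_mplus, sub_div]

end SimpleWalk

open SimpleWalk in
theorem statement3 :
    Tendsto
      (fun n : ℕ =>
        (expectation (1/2) (fun ω : Fin n → Bool => ((mplus ω : ℝ)) ^ 2) -
          (expectation (1/2) (fun ω : Fin n → Bool => (mplus ω : ℝ))) ^ 2) / n)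
      atTop (nhds (1 - 2 / Real.pi)) := by
  have hlim := (tendsto_const_nhds (x := (1 : ℝ))).sub
    ((tendsto_expectation_mplus_div_sqrt.mul tendsto_inv_sqrt_natCast).add
      (tendsto_expectation_mplus_div_sqrt.pow 2))
  rw [mul_zero, zero_add, Real.sq_sqrt (by positivity)] at hlim
  refine hlim.congr' ((eventually_gt_atTop 0).mono fun n hn => ?_)
  have : √(n : ℝ) ≠ 0 := by positivity
  dsimp only
  rw [expectation_mplus_sq]
  field_simp
  rw [Real.sq_sqrt n.cast_nonneg]
  ring
end

section
/- There exists a constant C > 0 such that for every integer n ≥ 1, the series Σ_{j=0}^∞ [1 - (1 - 2^{-j})^n] converges and | Σ_{j=0}^∞ [1 - (1 - 2^{-j})^n] - ln(n)/ln(2) | ≤ C. -/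
/-!
Put `m = ⌊log₂ n⌋`. Each term `1 - (1 - 2^{-j})^n` is at most `1`, and at most `n 2^{-j}` by
Bernoulli's inequality, so the terms with `j > m` add up to at most `2` and the series is at most
`m + 3`. Conversely `(1 - x)^n (1 + n x) ≤ (1 - x²)^n ≤ 1` bounds the `j`-th term below by
`1 - 2^j / n`, and since `∑_{j<m} 2^j < 2^m ≤ n` the first `m` terms already add up to more than
`m - 1`.
-/

open Finset Real

section OneSubPow

variable {x : ℝ}

lemma one_sub_one_sub_pow_nonneg (hx0 : 0 ≤ x) (hx1 : x ≤ 1) (n : ℕ) :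
    0 ≤ 1 - (1 - x) ^ n :=
  sub_nonneg.2 (pow_le_one₀ (sub_nonneg.2 hx1) (sub_le_self 1 hx0))

lemma one_sub_one_sub_pow_le_one (hx1 : x ≤ 1) (n : ℕ) : 1 - (1 - x) ^ n ≤ 1 :=
  sub_le_self _ (pow_nonneg (sub_nonneg.2 hx1) n)

lemma one_sub_one_sub_pow_le_mul (hx : x ≤ 2) (n : ℕ) : 1 - (1 - x) ^ n ≤ n * x := by
  have bernoulli := one_add_mul_le_pow (a := -x) (by linarith) n
  rw [← sub_eq_add_neg] at bernoulli
  linarith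

lemma one_sub_pow_mul_one_add_mul_le_one (hx0 : 0 ≤ x) (hx1 : x ≤ 1) (n : ℕ) :
    (1 - x) ^ n * (1 + n * x) ≤ 1 := calc
  (1 - x) ^ n * (1 + n * x) ≤ (1 - x) ^ n * (1 + x) ^ n :=
    mul_le_mul_of_nonneg_left (one_add_mul_le_pow (by linarith) n) (pow_nonneg (by linarith) n)
  _ = (1 - x ^ 2) ^ n := by rw [← mul_pow]; ring
  _ ≤ 1 := pow_le_one₀ (by nlinarith) (by nlinarith)

end OneSubPow

noncomputable def trieTerm (n j : ℕ) : ℝ := 1 - (1 - (1 / 2 : ℝ) ^ j) ^ n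

lemma half_pow_le_one (j : ℕ) : (1 / 2 : ℝ) ^ j ≤ 1 := pow_le_one₀ (by norm_num) (by norm_num)

lemma trieTerm_nonneg (n j : ℕ) : 0 ≤ trieTerm n j :=
  one_sub_one_sub_pow_nonneg (by positivity) (half_pow_le_one j) n

lemma trieTerm_le_one (n j : ℕ) : trieTerm n j ≤ 1 :=
  one_sub_one_sub_pow_le_one (half_pow_le_one j) n

lemma trieTerm_le_mul (n j : ℕ) : trieTerm n j ≤ n * (1 / 2 : ℝ) ^ j :=
  one_sub_one_sub_pow_le_mul (by linarith [half_pow_le_one j]) n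

lemma one_sub_div_le_trieTerm {n : ℕ} (hn : n ≠ 0) (j : ℕ) :
    1 - 2 ^ j / n ≤ trieTerm n j := by
  have hnx : (0 : ℝ) < n * (1 / 2) ^ j := by positivity
  have key : (1 - (1 / 2 : ℝ) ^ j) ^ n ≤ 2 ^ j / n := calc
    (1 - (1 / 2 : ℝ) ^ j) ^ n ≤ 1 / (1 + n * (1 / 2) ^ j) :=
      (le_div_iff₀ (by positivity)).2
        (one_sub_pow_mul_one_add_mul_le_one (by positivity) (half_pow_le_one j) n)
    _ ≤ 1 / (n * (1 / 2) ^ j) := one_div_le_one_div_of_le hnx (by linarith)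
    _ = 2 ^ j / n := by rw [one_div_pow]; field_simp
  unfold trieTerm
  linarith

lemma summable_trieTerm (n : ℕ) : Summable (trieTerm n) :=
  .of_nonneg_of_le (trieTerm_nonneg n) (trieTerm_le_mul n) (summable_geometric_two.mul_left _)

lemma sub_one_le_tsum_trieTerm {n k : ℕ} (hk : 2 ^ k ≤ n) : (k : ℝ) - 1 ≤ ∑' j, trieTerm n j := by
  have hn : n ≠ 0 := by have := Nat.one_le_two_pow (n := k); omega
  have geom : ∑ j ∈ range k, (2 : ℝ) ^ j < n := by
    exact_mod_cast (Nat.geomSum_lt le_rfl (by simp)).trans_le hk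
  calc (k : ℝ) - 1 ≤ ∑ j ∈ range k, (1 - (2 : ℝ) ^ j / n) := by
        have : (∑ j ∈ range k, (2 : ℝ) ^ j) / n ≤ 1 := (div_le_one (by positivity)).2 geom.le
        rw [sum_sub_distrib, ← sum_div]
        simp only [sum_const, card_range, nsmul_eq_mul, mul_one]
        linarith
    _ ≤ ∑ j ∈ range k, trieTerm n j := sum_le_sum fun j _ => one_sub_div_le_trieTerm hn j
    _ ≤ ∑' j, trieTerm n j := (summable_trieTerm n).sum_le_tsum _ fun j _ => trieTerm_nonneg n j

lemma tsum_trieTerm_le_add_two {n k : ℕ} (hk : n ≤ 2 ^ k) : ∑' j, trieTerm n j ≤ k + 2 := by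
  have head : ∑ j ∈ range k, trieTerm n j ≤ k := by
    simpa using sum_le_card_nsmul (range k) (trieTerm n) 1 fun j _ => trieTerm_le_one n j
  have tail_le (i : ℕ) : trieTerm n (i + k) ≤ (1 / 2 : ℝ) ^ i := by
    have hnk : (n : ℝ) * (1 / 2) ^ k ≤ 1 := by
      rw [one_div_pow, mul_one_div, div_le_one (by positivity)]
      exact_mod_cast hk
    calc trieTerm n (i + k) ≤ n * (1 / 2 : ℝ) ^ (i + k) := trieTerm_le_mul n _
      _ = (n * (1 / 2) ^ k) * (1 / 2 : ℝ) ^ i := by ring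
      _ ≤ (1 / 2 : ℝ) ^ i := mul_le_of_le_one_left (by positivity) hnk
  have tail : ∑' i, trieTerm n (i + k) ≤ 2 := tsum_geometric_two ▸
    ((summable_nat_add_iff k).2 (summable_trieTerm n)).tsum_le_tsum tail_le summable_geometric_two
  rw [← (summable_trieTerm n).sum_add_tsum_nat_add k]
  linarith

lemma abs_tsum_trieTerm_sub_logb_le {n : ℕ} (hn : n ≠ 0) :
    |∑' j, trieTerm n j - logb 2 n| ≤ 3 := by
  have hm : ⌊logb 2 n⌋₊ = Nat.log 2 n := by exact_mod_cast natFloor_logb_natCast 2 n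
  have logb_ge : (Nat.log 2 n : ℝ) ≤ logb 2 n :=
    hm ▸ Nat.floor_le (logb_nonneg one_lt_two (by exact_mod_cast Nat.one_le_iff_ne_zero.2 hn))
  have logb_lt : logb 2 n < Nat.log 2 n + 1 := hm ▸ Nat.lt_floor_add_one _
  have sum_ge := sub_one_le_tsum_trieTerm (Nat.pow_log_le_self 2 hn)
  have sum_le := tsum_trieTerm_le_add_two (Nat.lt_pow_succ_log_self one_lt_two n).le
  push_cast at sum_le
  rw [abs_le]
  constructor <;> linarith

/-- There is a constant `C > 0` such that for every `n ≥ 1` the series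
`Σ_{j=0}^∞ [1 - (1 - 2^{-j})^n]` converges and differs from `ln n / ln 2` by at most `C`. -/
theorem statement15 :
    ∃ C : ℝ, 0 < C ∧ ∀ n : ℕ, 1 ≤ n →
      (Summable fun j : ℕ => 1 - (1 - (1/2 : ℝ) ^ j) ^ n) ∧
      |(∑' j : ℕ, (1 - (1 - (1/2 : ℝ) ^ j) ^ n)) - Real.log n / Real.log 2| ≤ C :=
  ⟨3, by norm_num, fun n hn =>
    ⟨summable_trieTerm n, abs_tsum_trieTerm_sub_logb_le (Nat.one_le_iff_ne_zero.1 hn)⟩⟩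
end

section
/- The limit lim_{t → 0⁺} t · Σ_{a=1}^∞ sech((a + 1/2)·t) exists and equals π/2, where sech(u) = 1/cosh(u) and the series converges for every t > 0. -/
/-!
The Gudermannian function `gd x = arctan (sinh x)` is an antiderivative of `sech` with
`gd 0 = 0` and `gd x → π/2` as `x → ∞`. Since `sech` decreases on `[0, ∞)`, the mean value
theorem brackets `t · sech ((a + 1/2) t)` between consecutive increments of `gd` along the
grid `(k + 1/2) t`, and telescoping gives
`π/2 - gd (3t/2) ≤ t · Σ_{a ≥ 1} sech ((a + 1/2) t) ≤ π/2 - gd (t/2)`;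
both bounds tend to `π/2` as `t → 0⁺`.
-/

open Filter Set Topology

section StepSums

variable {F f : ℝ → ℝ}

theorem mul_sub_le_sub_le_mul_sub_of_hasDerivAt_of_antitoneOn {x y : ℝ} (hxy : x ≤ y)
    (hF : ∀ z ∈ Icc x y, HasDerivAt F (f z) z) (hf : AntitoneOn f (Icc x y)) :
    f y * (y - x) ≤ F y - F x ∧ F y - F x ≤ f x * (y - x) := by
  have hcont : ContinuousOn F (Icc x y) := fun z hz => (hF z hz).continuousAt.continuousWithinAt
  have hdiff : DifferentiableOn ℝ F (interior (Icc x y)) := fun z hz =>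
    (hF z (interior_subset hz)).differentiableAt.differentiableWithinAt
  have hderiv : ∀ z ∈ interior (Icc x y), deriv F z = f z := fun z hz =>
    (hF z (interior_subset hz)).deriv
  have hx : x ∈ Icc x y := left_mem_Icc.2 hxy
  have hy : y ∈ Icc x y := right_mem_Icc.2 hxy
  constructor
  · refine (convex_Icc x y).mul_sub_le_image_sub_of_le_deriv hcont hdiff (fun z hz => ?_)
      x hx y hy hxy
    rw [hderiv z hz]
    exact hf (interior_subset hz) hy (interior_subset hz).2
  · refine (convex_Icc x y).image_sub_le_mul_sub_of_deriv_le hcont hdiff (fun z hz => ?_)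
      x hx y hy hxy
    rw [hderiv z hz]
    exact hf hx (interior_subset hz) (interior_subset hz).1

variable {x₀ t : ℝ}

theorem sub_le_mul_sum_range_le_sub (hF : ∀ x, HasDerivAt F (f x) x) (hf : AntitoneOn f (Ici x₀))
    (ht : 0 < t) (n : ℕ) :
    F (x₀ + (n + 1) * t) - F (x₀ + t) ≤ t * ∑ k ∈ Finset.range n, f (x₀ + (k + 1) * t) ∧
      t * ∑ k ∈ Finset.range n, f (x₀ + (k + 1) * t) ≤ F (x₀ + n * t) - F x₀ := by
  have step (k : ℕ) := mul_sub_le_sub_le_mul_sub_of_hasDerivAt_of_antitoneOn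
    (x := x₀ + k * t) (y := x₀ + (k + 1) * t) (by nlinarith) (fun z _ => hF z)
    (hf.mono fun z hz => le_trans (le_add_of_nonneg_right (by positivity)) hz.1)
  have hstep (k : ℕ) : x₀ + (k + 1) * t - (x₀ + k * t) = t := by ring
  simp only [hstep] at step
  rw [Finset.mul_sum]
  constructor
  · have htel := Finset.sum_range_sub (fun k : ℕ => F (x₀ + (k + 1) * t)) n
    push_cast at htel
    rw [zero_add, one_mul] at htel
    rw [← htel]
    gcongr with k
    have := (step (k + 1)).2
    push_cast at this
    linarith
  · have htel := Finset.sum_range_sub (fun k : ℕ => F (x₀ + k * t)) n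
    push_cast at htel
    rw [zero_mul, add_zero] at htel
    rw [← htel]
    gcongr with k
    linarith [(step k).1]

theorem sum_range_le_div_of_tendsto_atTop {L : ℝ} (hF : ∀ x, HasDerivAt F (f x) x)
    (hf : AntitoneOn f (Ici x₀)) (hf0 : ∀ x, 0 ≤ f x) (hL : Tendsto F atTop (𝓝 L))
    (ht : 0 < t) (n : ℕ) :
    ∑ k ∈ Finset.range n, f (x₀ + (k + 1) * t) ≤ (L - F x₀) / t := by
  have hFL : F (x₀ + n * t) ≤ L := (monotone_of_hasDerivAt_nonneg hF hf0).ge_of_tendsto hL _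
  rw [le_div_iff₀ ht, mul_comm]
  linarith [(sub_le_mul_sum_range_le_sub hF hf ht n).2]

theorem summable_step_of_tendsto_atTop {L : ℝ} (hF : ∀ x, HasDerivAt F (f x) x)
    (hf : AntitoneOn f (Ici x₀)) (hf0 : ∀ x, 0 ≤ f x) (hL : Tendsto F atTop (𝓝 L))
    (ht : 0 < t) : Summable fun k : ℕ => f (x₀ + (k + 1) * t) :=
  summable_of_sum_range_le (fun _ => hf0 _) (sum_range_le_div_of_tendsto_atTop hF hf hf0 hL ht)

theorem sub_le_mul_tsum_le_sub {L : ℝ} (hF : ∀ x, HasDerivAt F (f x) x)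
    (hf : AntitoneOn f (Ici x₀)) (hf0 : ∀ x, 0 ≤ f x) (hL : Tendsto F atTop (𝓝 L))
    (ht : 0 < t) :
    L - F (x₀ + t) ≤ t * ∑' k : ℕ, f (x₀ + (k + 1) * t) ∧
      t * ∑' k : ℕ, f (x₀ + (k + 1) * t) ≤ L - F x₀ := by
  constructor
  · have hsum := (summable_step_of_tendsto_atTop hF hf hf0 hL ht).hasSum.mul_left t
    have hgrid : Tendsto (fun n : ℕ => x₀ + (n + 1) * t) atTop atTop :=
      tendsto_atTop_add_const_left _ _ <|
        (tendsto_natCast_atTop_atTop.atTop_add tendsto_const_nhds).atTop_mul_const ht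
    refine le_of_tendsto_of_tendsto' ((hL.comp hgrid).sub_const _) hsum.tendsto_sum_nat
      fun n => ?_
    rw [← Finset.mul_sum]
    exact (sub_le_mul_sum_range_le_sub hF hf ht n).1
  · rw [← le_div_iff₀' ht]
    exact Real.tsum_le_of_sum_range_le (fun _ => hf0 _)
      (sum_range_le_div_of_tendsto_atTop hF hf hf0 hL ht)

end StepSums

noncomputable def gudermannian (x : ℝ) : ℝ := Real.arctan (Real.sinh x)

theorem hasDerivAt_gudermannian (x : ℝ) : HasDerivAt gudermannian (1 / Real.cosh x) x := by
  refine ((Real.hasDerivAt_arctan (Real.sinh x)).comp x (Real.hasDerivAt_sinh x)).congr_deriv ?_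
  rw [← Real.cosh_sq', div_mul_eq_mul_div, one_mul, pow_two, div_mul_cancel_right₀
    (Real.cosh_pos x).ne', one_div]

theorem continuous_gudermannian : Continuous gudermannian :=
  Real.continuous_arctan.comp Real.continuous_sinh

theorem gudermannian_zero : gudermannian 0 = 0 := by
  simp [gudermannian]

theorem tendsto_gudermannian_atTop : Tendsto gudermannian atTop (𝓝 (Real.pi / 2)) := by
  have hsinh : Tendsto Real.sinh atTop atTop := tendsto_atTop_mono' atTop
    ((eventually_ge_atTop 0).mono fun _ => Real.self_le_sinh_iff.2) tendsto_id
  exact (Real.tendsto_arctan_atTop.mono_right nhdsWithin_le_nhds).comp hsinh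

theorem antitoneOn_one_div_cosh : AntitoneOn (fun x => 1 / Real.cosh x) (Ici 0) :=
  fun _ hx _ hy hxy => one_div_le_one_div_of_le (Real.cosh_pos _)
    (Real.cosh_strictMonoOn.monotoneOn hx hy hxy)

/-- For every `t > 0` the series `Σ_{a=1}^∞ sech((a + 1/2) t)` converges, and
`t · Σ_{a=1}^∞ sech((a + 1/2) t) → π/2` as `t → 0⁺` (the index `a : ℕ` below corresponds
to `a + 1 ≥ 1`, and `sech u = 1 / cosh u`). -/
theorem statement17 :
    (∀ t : ℝ, 0 < t →
      Summable fun a : ℕ => 1 / Real.cosh ((((a : ℝ) + 1) + 1/2) * t)) ∧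
    Tendsto (fun t : ℝ => t * ∑' a : ℕ, 1 / Real.cosh ((((a : ℝ) + 1) + 1/2) * t))
      (nhdsWithin 0 (Set.Ioi 0)) (nhds (Real.pi / 2)) := by
  have hshift (t : ℝ) (a : ℕ) : (((a : ℝ) + 1) + 1/2) * t = t / 2 + (a + 1) * t := by ring
  have hanti {t : ℝ} (ht : 0 < t) : AntitoneOn (fun x => 1 / Real.cosh x) (Ici (t / 2)) :=
    antitoneOn_one_div_cosh.mono (Ici_subset_Ici.2 (by positivity))
  have hsech_nonneg (x : ℝ) : 0 ≤ 1 / Real.cosh x := by positivity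
  simp only [hshift]
  refine ⟨fun t ht => summable_step_of_tendsto_atTop (f := fun x => 1 / Real.cosh x)
    hasDerivAt_gudermannian (hanti ht) hsech_nonneg tendsto_gudermannian_atTop ht, ?_⟩
  have hbound (c : ℝ) :
      Tendsto (fun t => Real.pi / 2 - gudermannian (c * t)) (𝓝[>] 0) (𝓝 (Real.pi / 2)) := by
    have h := (continuous_gudermannian.comp (continuous_const_mul c)).tendsto 0
    simp only [Function.comp_def, mul_zero, gudermannian_zero] at h
    simpa using (h.mono_left nhdsWithin_le_nhds).const_sub (Real.pi / 2)
  have hsandwich {t : ℝ} (ht : 0 < t) := sub_le_mul_tsum_le_sub (f := fun x => 1 / Real.cosh x)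
    hasDerivAt_gudermannian (hanti ht) hsech_nonneg tendsto_gudermannian_atTop ht
  refine tendsto_of_tendsto_of_tendsto_of_le_of_le' (hbound (3 / 2)) (hbound (1 / 2)) ?_ ?_ <;>
    filter_upwards [self_mem_nhdsWithin] with t ht
  · exact (hsandwich ht).1.trans_eq' (by ring_nf)
  · exact (hsandwich ht).2.trans_eq (by ring_nf)
end

section
/- The limit lim_{t → 0⁺} t² · Σ_{a=1}^∞ a·sech(a·t) exists and equals 2·Σ_{k=0}^∞ (-1)^k/(2k+1)² (twice Catalan's constant), where sech(u) = 1/cosh(u) and the series converges for every t > 0. -/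
/-!
Expanding `sech u = 2 ∑ₖ (-1)ᵏ e^{-(2k+1)u}` and summing over `a` first (the double series
converges absolutely) turns the series into `∑ₖ (-1)ᵏ · 2 / (2 sinh ((2k+1)t/2))²`.
Since `sinh x ≥ x`, the `k`-th term of `t²` times this series is bounded by `2 / (2k+1)²`
uniformly in `t`, and it tends to `2 (-1)ᵏ / (2k+1)²` as `t → 0`, so dominated convergence
for series gives the limit.
-/

open Filter Topology Real

theorem hasSum_inv_cosh {u : ℝ} (hu : 0 < u) :
    HasSum (fun k : ℕ => 2 * (-1) ^ k * exp (-((2 * k + 1) * u))) (cosh u)⁻¹ := by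
  have hr : ‖-exp (-u) ^ 2‖ < 1 := by
    rw [norm_neg, norm_pow, norm_of_nonneg (exp_pos _).le]
    exact pow_lt_one₀ (exp_pos _).le (exp_lt_one_iff.mpr (by linarith)) two_ne_zero
  have hval : (cosh u)⁻¹ = 2 * exp (-u) * (1 - -exp (-u) ^ 2)⁻¹ := by
    rw [cosh_eq, exp_neg, sub_neg_eq_add]
    have := exp_pos u
    field_simp
  rw [hval]
  refine ((hasSum_geometric_of_norm_lt_one hr).mul_left _).congr_fun fun k => ?_
  rw [neg_pow (exp (-u) ^ 2), ← pow_mul, ← exp_nat_mul,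
    show -((2 * (k : ℝ) + 1) * u) = -u + ((2 * k : ℕ) : ℝ) * -u by push_cast; ring, exp_add]
  ring

theorem hasSum_succ_mul_exp_neg_mul {x : ℝ} (hx : 0 < x) :
    HasSum (fun n : ℕ => ((n : ℝ) + 1) * exp (-((n + 1) * x))) ((2 * sinh (x / 2)) ^ 2)⁻¹ := by
  have hz : ‖exp (-x)‖ < 1 := by
    rw [norm_of_nonneg (exp_pos _).le]
    exact exp_lt_one_iff.mpr (by linarith)
  have hval : ((2 * sinh (x / 2)) ^ 2)⁻¹ = exp (-x) * (1 / (1 - exp (-x)) ^ (1 + 1)) := by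
    have hsq : exp (-x) = (exp (x / 2))⁻¹ ^ 2 := by rw [← exp_neg, ← exp_nat_mul]; ring_nf
    have hy : 1 < exp (x / 2) := one_lt_exp_iff.mpr (by linarith)
    rw [hsq, sinh_eq, exp_neg, one_add_one_eq_two]
    generalize exp (x / 2) = y at hy ⊢
    have : y ^ 2 - 1 ≠ 0 := by nlinarith
    have : y ≠ 0 := by positivity
    field_simp
  rw [hval]
  refine ((hasSum_choose_mul_geometric_of_norm_lt_one 1 hz).mul_left _).congr_fun fun n => ?_
  rw [Nat.choose_one_right, mul_left_comm, ← pow_succ', ← exp_nat_mul]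
  push_cast
  ring_nf

theorem tendsto_sq_mul_inv_two_mul_sinh_sq {c : ℝ} (hc : c ≠ 0) :
    Tendsto (fun t => t ^ 2 * ((2 * sinh (c * t / 2)) ^ 2)⁻¹) (𝓝[≠] 0) (𝓝 (c ^ 2)⁻¹) := by
  have hderiv : HasDerivAt (fun t => 2 * sinh (c * t / 2)) c 0 := by
    have h := (((hasDerivAt_id (0 : ℝ)).const_mul c).div_const 2).sinh.const_mul 2
    simp only [id, mul_zero, zero_div, cosh_zero, mul_one, one_mul] at h
    rwa [mul_div_cancel₀ _ two_ne_zero] at h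
  refine ((hasDerivAt_iff_tendsto_slope.mp hderiv).pow 2 |>.inv₀ (pow_ne_zero 2 hc)).congr
    fun t => ?_
  simp only [slope_def_field, mul_zero, zero_div, sinh_zero, sub_zero]
  rw [div_pow, inv_div, div_eq_mul_inv]

theorem inv_two_mul_sinh_half_sq_le {x : ℝ} (hx : 0 < x) :
    ((2 * sinh (x / 2)) ^ 2)⁻¹ ≤ (x ^ 2)⁻¹ := by
  have := self_le_sinh_iff.mpr (by positivity : 0 ≤ x / 2)
  gcongr
  linarith

theorem summable_inv_two_mul_add_one_sq :
    Summable fun k : ℕ => ((2 * (k : ℝ) + 1) ^ 2)⁻¹ := by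
  have := (summable_nat_pow_inv.mpr one_lt_two).comp_injective
    (fun m n h => by simpa using h : Function.Injective fun k : ℕ => 2 * k + 1)
  simpa [Function.comp_def] using this

noncomputable def sechExpansionTerm (t : ℝ) (k a : ℕ) : ℝ :=
  2 * ((a : ℝ) + 1) * exp (-((2 * k + 1) * ((a + 1) * t)))

section sechExpansionTerm

variable {t : ℝ}

theorem hasSum_sechExpansionTerm (ht : 0 < t) (k : ℕ) :
    HasSum (sechExpansionTerm t k) (2 * ((2 * sinh ((2 * k + 1) * t / 2)) ^ 2)⁻¹) := by
  refine ((hasSum_succ_mul_exp_neg_mul (by positivity : 0 < (2 * (k : ℝ) + 1) * t)).mul_left 2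
    ).congr_fun fun a => ?_
  rw [sechExpansionTerm, mul_assoc, mul_left_comm ((a : ℝ) + 1)]

theorem hasSum_neg_one_pow_mul_sechExpansionTerm (ht : 0 < t) (a : ℕ) :
    HasSum (fun k => (-1) ^ k * sechExpansionTerm t k a)
      (((a : ℝ) + 1) / cosh (((a : ℝ) + 1) * t)) := by
  rw [div_eq_mul_inv]
  refine ((hasSum_inv_cosh (by positivity : 0 < ((a : ℝ) + 1) * t)).mul_left _).congr_fun
    fun k => ?_
  rw [sechExpansionTerm]
  ring

theorem summable_neg_one_pow_mul_sechExpansionTerm (ht : 0 < t) :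
    Summable fun p : ℕ × ℕ => (-1) ^ p.1 * sechExpansionTerm t p.1 p.2 := by
  have hnonneg : 0 ≤ fun p : ℕ × ℕ => sechExpansionTerm t p.1 p.2 := fun p => by
    unfold sechExpansionTerm; positivity
  refine Summable.of_norm_bounded ((summable_prod_of_nonneg hnonneg).mpr ⟨fun k =>
    (hasSum_sechExpansionTerm ht k).summable, ?_⟩) fun p => by simp [abs_of_nonneg (hnonneg p)]
  refine (summable_inv_two_mul_add_one_sq.mul_left (2 * (t ^ 2)⁻¹)).of_nonneg_of_le
    (fun k => tsum_nonneg fun a => hnonneg (k, a)) fun k => ?_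
  rw [(hasSum_sechExpansionTerm ht k).tsum_eq, mul_assoc, ← mul_inv, ← mul_pow, mul_comm t]
  exact mul_le_mul_of_nonneg_left (inv_two_mul_sinh_half_sq_le (by positivity)) zero_le_two

theorem hasSum_succ_div_cosh (ht : 0 < t) :
    HasSum (fun a : ℕ => ((a : ℝ) + 1) / cosh (((a : ℝ) + 1) * t))
      (∑' k : ℕ, (-1) ^ k * (2 * ((2 * sinh ((2 * k + 1) * t / 2)) ^ 2)⁻¹)) := by
  have hsum := summable_neg_one_pow_mul_sechExpansionTerm ht
  have hrows := hsum.hasSum.prod_fiberwise fun k =>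
    (hasSum_sechExpansionTerm ht k).mul_left ((-1) ^ k)
  rw [hrows.tsum_eq]
  exact ((Equiv.prodComm ℕ ℕ).hasSum_iff.mpr hsum.hasSum).prod_fiberwise
    (hasSum_neg_one_pow_mul_sechExpansionTerm ht)

end sechExpansionTerm

theorem tendsto_sq_mul_tsum_inv_two_mul_sinh_sq :
    Tendsto
      (fun t => ∑' k : ℕ, t ^ 2 * ((-1) ^ k * (2 * ((2 * sinh ((2 * k + 1) * t / 2)) ^ 2)⁻¹)))
      (𝓝[>] 0) (𝓝 (∑' k : ℕ, (-1) ^ k * (2 * ((2 * (k : ℝ) + 1) ^ 2)⁻¹))) := by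
  refine tendsto_tsum_of_dominated_convergence (summable_inv_two_mul_add_one_sq.mul_left 2)
    (fun k => ?_) ?_
  · have := ((tendsto_sq_mul_inv_two_mul_sinh_sq (by positivity : 2 * (k : ℝ) + 1 ≠ 0)).mono_left
      (nhdsGT_le_nhdsNE 0)).const_mul ((-1) ^ k * 2)
    convert this using 2 <;> ring
  · filter_upwards [self_mem_nhdsWithin] with t (ht : 0 < t) k
    calc ‖t ^ 2 * ((-1) ^ k * (2 * ((2 * sinh ((2 * k + 1) * t / 2)) ^ 2)⁻¹))‖
        = 2 * (t ^ 2 * ((2 * sinh ((2 * k + 1) * t / 2)) ^ 2)⁻¹) := by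
          rw [norm_mul, norm_mul, norm_pow, norm_pow, norm_neg, norm_one, one_pow, one_mul,
            norm_of_nonneg ht.le, norm_of_nonneg (by positivity)]
          ring
      _ ≤ 2 * (t ^ 2 * (((2 * k + 1) * t) ^ 2)⁻¹) := by
          gcongr 2 * (t ^ 2 * ?_)
          exact inv_two_mul_sinh_half_sq_le (by positivity)
      _ = 2 * ((2 * (k : ℝ) + 1) ^ 2)⁻¹ := by
          field_simp

/-- For every `t > 0` the series `Σ_{a=1}^∞ a·sech(a t)` converges, and
`t² · Σ_{a=1}^∞ a·sech(a t) → 2G` as `t → 0⁺`, where `G = Σ_{k=0}^∞ (-1)^k/(2k+1)²` is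
Catalan's constant (the index `a : ℕ` below corresponds to `a + 1 ≥ 1`, and
`sech u = 1 / cosh u`). -/
theorem statement18 :
    (∀ t : ℝ, 0 < t →
      Summable fun a : ℕ => ((a : ℝ) + 1) / Real.cosh (((a : ℝ) + 1) * t)) ∧
    Tendsto (fun t : ℝ => t ^ 2 * ∑' a : ℕ, ((a : ℝ) + 1) / Real.cosh (((a : ℝ) + 1) * t))
      (nhdsWithin 0 (Set.Ioi 0))
      (nhds (2 * ∑' k : ℕ, (-1 : ℝ) ^ k / (2 * (k : ℝ) + 1) ^ 2)) := by
  refine ⟨fun t ht => (hasSum_succ_div_cosh ht).summable, ?_⟩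
  rw [← tsum_mul_left, tsum_congr fun k => by rw [div_eq_mul_inv, mul_left_comm]]
  refine tendsto_sq_mul_tsum_inv_two_mul_sinh_sq.congr' ?_
  filter_upwards [self_mem_nhdsWithin] with t ht
  rw [(hasSum_succ_div_cosh ht).tsum_eq, tsum_mul_left]
end
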